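/- arXiv:2007.04936 — 2 statements merged into one kernel-verified Lean document; each statement's English description precedes it below -/
import Mathlib

section
/- Let μ be a positive compactly supported measure on ℂ, P the orthogonal projection of L²(μ) onto P²(μ) (the closure of polynomials), M multiplication by z, P_n the projection onto polynomials of degree ≤ n, and (h_{jk}) the Hessenberg matrix of M restricted to P²(μ). Then the Hilbert–Schmidt norm of (I−P) M* P_n satisfies ‖(I−P) M* P_n‖²_HS = Σ_{j ≤ n} ( Σ_{k ≤ j+1} |h_{kj}|² − Σ_{k ≥ j−1, over relevant k} |h_{jk}|² ), i.e. for each j ≤ n, ‖(I−P)M* p_j‖² equals the squared norm of the j-th column of the Hessenberg matrix minus the squared norm of its j-th row. -/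
open ContinuousLinearMap

/-!
Write `x = M* p_j`. Since `M` is normal, `‖x‖ = ‖M p_j‖`, and as `M p_j ∈ P²(μ)` Parseval for
the orthonormal polynomials gives `‖M p_j‖² = Σ_k |h_{kj}|²`, a finite sum because the matrix
is Hessenberg. On the other hand `⟨p_k, x⟩ = ⟨M p_k, p_j⟩ = h_{jk}`, so Parseval applied to
`P x` gives `‖P x‖² = Σ_k |h_{jk}|²`, and Pythagoras gives `‖x - P x‖² = ‖x‖² - ‖P x‖²`.
-/

section

variable {ι 𝕜 E : Type*} [RCLike 𝕜] [NormedAddCommGroup E] [InnerProductSpace 𝕜 E]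

namespace HilbertBasis

theorem hasSum_norm_inner_sq (b : HilbertBasis ι 𝕜 E) (x : E) :
    HasSum (fun i => ‖(inner 𝕜 (b i) x : 𝕜)‖ ^ 2) (‖x‖ ^ 2) := by
  simpa [b.repr_apply_apply] using lp.hasSum_norm (p := 2) (by norm_num) (b.repr x)

theorem hasSum_norm_inner_sq_starProjection {U : Submodule 𝕜 E} [U.HasOrthogonalProjection]
    (b : HilbertBasis ι 𝕜 U) (x : E) :
    HasSum (fun i => ‖(inner 𝕜 (b i : E) x : 𝕜)‖ ^ 2) (‖U.starProjection x‖ ^ 2) := by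
  have parseval := b.hasSum_norm_inner_sq (U.orthogonalProjectionOnto x)
  simp only [Submodule.inner_orthogonalProjectionOnto_eq_of_mem_left] at parseval
  exact parseval

end HilbertBasis

theorem Submodule.norm_sub_starProjection_sq (U : Submodule 𝕜 E) [U.HasOrthogonalProjection]
    (x : E) : ‖x - U.starProjection x‖ ^ 2 = ‖x‖ ^ 2 - ‖U.starProjection x‖ ^ 2 := by
  rw [U.norm_sq_eq_add_norm_sq_starProjection x, U.starProjection_orthogonal_val]
  ring

theorem IsStarNormal.norm_adjoint_apply_sub_starProjection_sq [CompleteSpace E] {T : E →L[𝕜] E}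
    (hT : IsStarNormal T) {U : Submodule 𝕜 E} [U.HasOrthogonalProjection]
    (b : HilbertBasis ι 𝕜 U) (x : E) :
    ‖adjoint T x - U.starProjection (adjoint T x)‖ ^ 2
      = ‖T x‖ ^ 2 - ∑' i, ‖(inner 𝕜 (T (b i)) x : 𝕜)‖ ^ 2 := by
  have parseval := b.hasSum_norm_inner_sq_starProjection (adjoint T x)
  simp only [adjoint_inner_right] at parseval
  rw [U.norm_sub_starProjection_sq, parseval.tsum_eq,
    ← isStarNormal_iff_norm_eq_adjoint.mp hT x]

end

/-- for the subnormal multiplier `M` (a normal operator on `L²(μ)` leaving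
invariant `P²(μ)`, here abstracted as a closed subspace `K` with Hilbert basis `b` of
orthonormal polynomials), the Hilbert–Schmidt norm of `(I−P) M* P_n` equals
`Σ_{j≤n} (Σ_{k≤j+1} |h_{kj}|² − Σ_k |h_{jk}|²)`, i.e. for each `j ≤ n` the square norm of
the `j`-th column of the Hessenberg matrix minus the square norm of its `j`-th row. -/
theorem stmt8 {H : Type*} [NormedAddCommGroup H] [InnerProductSpace ℂ H] [CompleteSpace H]
    (K : Submodule ℂ H) [K.HasOrthogonalProjection]
    (b : HilbertBasis ℕ ℂ K) (M : H →L[ℂ] H)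
    (hnormal : ContinuousLinearMap.adjoint M ∘L M = M ∘L ContinuousLinearMap.adjoint M)
    (hinv : ∀ j : ℕ, M ((b j : K) : H) ∈ K)
    (h : ℕ → ℕ → ℂ)
    (hh : ∀ k j, h k j = (inner ℂ (M ((b j : K) : H)) ((b k : K) : H) : ℂ))
    (hhess : ∀ k j, j + 1 < k → h k j = 0)
    (P : H →L[ℂ] H) (hP : P = K.subtypeL ∘L K.orthogonalProjectionOnto)
    (n : ℕ) :
    (∀ j ≤ n, ‖ContinuousLinearMap.adjoint M ((b j : K) : H)
          - P (ContinuousLinearMap.adjoint M ((b j : K) : H))‖ ^ 2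
        = (∑ k ∈ Finset.range (j + 2), ‖h k j‖ ^ 2) - ∑' k : ℕ, ‖h j k‖ ^ 2) ∧
    (∑ j ∈ Finset.range (n + 1), ‖ContinuousLinearMap.adjoint M ((b j : K) : H)
          - P (ContinuousLinearMap.adjoint M ((b j : K) : H))‖ ^ 2)
      = ∑ j ∈ Finset.range (n + 1),
          ((∑ k ∈ Finset.range (j + 2), ‖h k j‖ ^ 2) - ∑' k : ℕ, ‖h j k‖ ^ 2) := by
  have hP' : P = K.starProjection := hP
  subst hP'
  have column : ∀ j, ‖M (b j)‖ ^ 2 = ∑ k ∈ Finset.range (j + 2), ‖h k j‖ ^ 2 := by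
    intro j
    have parseval := b.hasSum_norm_inner_sq_starProjection (M (b j))
    have entry : ∀ k, ‖(inner ℂ (b k : H) (M (b j)) : ℂ)‖ = ‖h k j‖ := fun k => by
      rw [hh, norm_inner_symm]
    simp only [K.starProjection_eq_self_iff.mpr (hinv j), entry] at parseval
    refine parseval.unique (hasSum_sum_of_ne_finset_zero fun k hk => ?_)
    rw [hhess k j (by simp only [Finset.mem_range] at hk; omega), norm_zero, sq, zero_mul]
  have column_sub_row : ∀ j, ‖adjoint M (b j) - K.starProjection (adjoint M (b j))‖ ^ 2
      = (∑ k ∈ Finset.range (j + 2), ‖h k j‖ ^ 2) - ∑' k, ‖h j k‖ ^ 2 := by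
    intro j
    simp only [(IsStarNormal.mk hnormal).norm_adjoint_apply_sub_starProjection_sq b, column, hh]
  exact ⟨fun j _ => column_sub_row j, Finset.sum_congr rfl fun j _ => column_sub_row j⟩
end

section
/- With ρ > 1 and h_{n+1,n}, h_{n,n+1} the Hessenberg entries of the ellipse example, (1/4)(ρ − 1/ρ) − (h_{n+1,n}² − h_{n,n+1}²) = O(1/n) as n → ∞; explicitly, (1/4)(ρ − 1/ρ) − (1/4)[ ((n+1)/(n+2)) ρ (1 − ρ^{−2n−3})/(1 − ρ^{−2n−2}) − ((n+2)/(n+1)) (1/ρ) (1 − ρ^{−2n−2})/(1 − ρ^{−2n−3}) ] is bounded by C/n for some constant C depending only on ρ. -/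
set_option maxHeartbeats 1000000 in
/-- for the ellipse example with parameter `ρ > 1`,
`(1/4)(ρ − 1/ρ) − (h_{n+1,n}² − h_{n,n+1}²) = O(1/n)`: there are `C > 0` and `N` such that
for all `n ≥ N` the displayed difference has absolute value at most `C/n`. -/
theorem stmt14 (ρ : ℝ) (hρ : 1 < ρ) :
    ∃ C > (0 : ℝ), ∃ N : ℕ, ∀ n : ℕ, N ≤ n →
      |(1 / 4) * (ρ - 1 / ρ)
        - (1 / 4) * ((((n : ℝ) + 1) / ((n : ℝ) + 2)) * ρ
              * (1 - ρ ^ (-2 * (n : ℤ) - 3)) / (1 - ρ ^ (-2 * (n : ℤ) - 2))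
            - (((n : ℝ) + 2) / ((n : ℝ) + 1)) * (1 / ρ)
              * (1 - ρ ^ (-2 * (n : ℤ) - 2)) / (1 - ρ ^ (-2 * (n : ℤ) - 3)))|
        ≤ C / n := by
  have hρ0 : (0 : ℝ) < ρ := lt_trans one_pos hρ
  set r : ℝ := (ρ⁻¹) ^ 2 with hr_def
  have hr0 : 0 ≤ r := by positivity
  have hr1 : r < 1 := by
    have : ρ⁻¹ < 1 := inv_lt_one_of_one_lt₀ hρ
    have h0 : 0 < ρ⁻¹ := by positivity
    nlinarith
  have htend : Filter.Tendsto (fun n : ℕ => (n : ℝ) * r ^ n) Filter.atTop (nhds 0) :=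
    tendsto_self_mul_const_pow_of_lt_one hr0 hr1
  have hev : ∀ᶠ n : ℕ in Filter.atTop, (n : ℝ) * r ^ n < 1 / 2 := by
    have := htend.eventually (eventually_lt_nhds (show (0:ℝ) < 1/2 by norm_num))
    simpa using this
  obtain ⟨N₀, hN₀⟩ := Filter.eventually_atTop.mp hev
  refine ⟨2 * (ρ + 1 / ρ), by positivity, max N₀ 1, ?_⟩
  intro n hn
  have hn1 : 1 ≤ n := le_trans (le_max_right _ _) hn
  have hm1 : (1 : ℝ) ≤ (n : ℝ) := by exact_mod_cast hn1
  have hm0 : (0 : ℝ) < (n : ℝ) := lt_of_lt_of_le one_pos hm1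
  set m : ℝ := (n : ℝ) with hm_def
  set v : ℝ := ρ ^ (-2 * (n : ℤ) - 2) with hv_def
  set u : ℝ := ρ ^ (-2 * (n : ℤ) - 3) with hu_def
  have hu0 : 0 < u := zpow_pos hρ0 _
  have hv0 : 0 < v := zpow_pos hρ0 _
  have huv : u * ρ = v := by
    rw [hu_def, hv_def, show (-2*(n:ℤ)-2) = (-2*(n:ℤ)-3)+1 by ring,
      zpow_add₀ (ne_of_gt hρ0), zpow_one]
  have hvr : v = ρ⁻¹ ^ 2 * r ^ n := by
    rw [hv_def, hr_def, ← pow_mul, inv_pow, inv_pow, ← zpow_natCast ρ 2,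
      ← zpow_natCast ρ (2 * n), ← zpow_neg, ← zpow_neg, ← zpow_add₀ (ne_of_gt hρ0)]
    congr 1
    push_cast
    ring
  have hmv : m * v ≤ 1 / 2 := by
    have h1 := hN₀ n (le_trans (le_max_left _ _) hn)
    have hρi2 : ρ⁻¹ ^ 2 ≤ 1 := by
      have : ρ⁻¹ ≤ 1 := le_of_lt (inv_lt_one_of_one_lt₀ hρ)
      have h0 : 0 < ρ⁻¹ := by positivity
      nlinarith
    have hrn : (0:ℝ) ≤ r ^ n := by positivity
    calc m * v = ρ⁻¹ ^ 2 * (m * r ^ n) := by rw [hvr]; ring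
      _ ≤ 1 * (m * r ^ n) := by
          apply mul_le_mul_of_nonneg_right hρi2
          positivity
      _ ≤ 1 / 2 := by rw [one_mul]; exact le_of_lt h1
  clear_value m u v
  have hv2 : v ≤ 1 / 2 := by nlinarith
  have huv' : u < v := by nlinarith
  have h1v : (0:ℝ) < 1 - v := by nlinarith
  have h1u : (0:ℝ) < 1 - u := by nlinarith
  -- key algebraic identity
  have key : (1 / 4) * (ρ - 1 / ρ)
      - (1 / 4) * (((m + 1) / (m + 2)) * ρ * (1 - u) / (1 - v)
          - ((m + 2) / (m + 1)) * (1 / ρ) * (1 - v) / (1 - u))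
      = (1 / 4) * ((1 + (m + 1) * u - (m + 2) * v)
          * (ρ / ((m + 2) * (1 - v)) + (1 / ρ) / ((m + 1) * (1 - u)))) := by
    have h2 : m + 2 ≠ 0 := by positivity
    have h3 : m + 1 ≠ 0 := by positivity
    field_simp
    ring
  rw [key]
  have hA : |1 + (m + 1) * u - (m + 2) * v| ≤ 3 := by
    rw [abs_le]
    constructor
    · nlinarith [hmv, hv2, hu0, huv', hm0]
    · nlinarith [hmv, hv2, hu0, huv', hm0, mul_pos hm0 hu0]
  have hF0 : 0 ≤ ρ / ((m + 2) * (1 - v)) + (1 / ρ) / ((m + 1) * (1 - u)) := by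
    have h2 : (0:ℝ) < m + 2 := by positivity
    have h3 : (0:ℝ) < m + 1 := by positivity
    positivity
  have hF : ρ / ((m + 2) * (1 - v)) + (1 / ρ) / ((m + 1) * (1 - u))
      ≤ 2 * ρ / m + 2 * (1 / ρ) / m := by
    have e1 : ρ / ((m + 2) * (1 - v)) ≤ 2 * ρ / m := by
      rw [div_le_div_iff₀ (by positivity) hm0]
      nlinarith
    have e2 : (1 / ρ) / ((m + 1) * (1 - u)) ≤ 2 * (1 / ρ) / m := by
      have hρinv : (0:ℝ) < 1 / ρ := by positivity
      have hu2 : u ≤ 1 / 2 := le_of_lt (lt_of_lt_of_le huv' hv2)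
      rw [div_le_div_iff₀ (by positivity) hm0]
      nlinarith [mul_nonneg (le_of_lt hρinv) (show (0:ℝ) ≤ 2 * (m + 1) * (1 - u) - m by nlinarith)]
    linarith
  rw [abs_mul, abs_mul]
  have : |(1:ℝ)/4| = 1/4 := by norm_num
  rw [this, abs_of_nonneg hF0]
  have hρinv : (0:ℝ) < 1 / ρ := by positivity
  calc 1 / 4 * (|1 + (m + 1) * u - (m + 2) * v|
        * (ρ / ((m + 2) * (1 - v)) + (1 / ρ) / ((m + 1) * (1 - u))))
      ≤ 1 / 4 * (3 * (2 * ρ / m + 2 * (1 / ρ) / m)) := by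
        apply mul_le_mul_of_nonneg_left _ (by norm_num)
        exact mul_le_mul hA hF hF0 (by norm_num)
    _ = (3 / 2 * (ρ + 1 / ρ)) / m := by field_simp; ring
    _ ≤ 2 * (ρ + 1 / ρ) / m := by
        gcongr
        nlinarith
end
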